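/- arXiv:1806.11247 — 2 statements merged into one kernel-verified Lean document; each statement's English description precedes it below -/
import Mathlib

section
/- Let ι be a countable index type, c : ι → ℝ a family of nonnegative reals whose support {i : cᵢ ≠ 0} is nonempty, and d : ι → ℝ. Assume d attains a minimum value d₀ on the support of c, and that for every j ∈ ℕ the family (cᵢ·2^{-2dᵢj})ᵢ is summable. Then lim_{j→∞} (log ∑ᵢ cᵢ·2^{-2dᵢj}) / (−2j·log 2) = d₀. -/
open Filter Topology Real

/-!
Writing `2^{-2 dᵢ j} = exp (-dᵢ t)` with `t = 2 j log 2`, the sum is squeezed between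
`c i₀ e^{-d₀ t}` and `(∑ᵢ cᵢ) e^{-d₀ t}`, since every index in the support of `c` has
`dᵢ ≥ d₀`. Hence `log S(t) = -d₀ t + O(1)`, and dividing by `-t` gives `d₀` in the limit.
-/

theorem tendsto_log_div_neg_of_exp_bounds {f : ℝ → ℝ} {A B d₀ : ℝ} (hA : 0 < A)
    (hlo : ∀ᶠ t in atTop, A * exp (-(d₀ * t)) ≤ f t)
    (hhi : ∀ᶠ t in atTop, f t ≤ B * exp (-(d₀ * t))) :
    Tendsto (fun t => log (f t) / -t) atTop (𝓝 d₀) := by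
  have hlim : ∀ C : ℝ, Tendsto (fun t => d₀ - C / t) atTop (𝓝 d₀) := fun C => by
    simpa using tendsto_const_nhds.sub (tendsto_const_nhds.div_atTop (tendsto_id (α := ℝ)))
  refine tendsto_of_tendsto_of_tendsto_of_le_of_le' (hlim (log B)) (hlim (log A)) ?_ ?_
  · filter_upwards [hlo, hhi, eventually_gt_atTop 0] with t hlo hhi ht
    have hf : 0 < f t := lt_of_lt_of_le (by positivity) hlo
    have hB : 0 < B := pos_of_mul_pos_left (hf.trans_le hhi) (exp_pos _).le
    have hlog : log (f t) ≤ log B - d₀ * t := by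
      simpa [log_mul hB.ne' (exp_pos _).ne', sub_eq_add_neg] using log_le_log hf hhi
    rw [le_div_iff_of_neg (neg_neg_of_pos ht)]
    field_simp
    linarith
  · filter_upwards [hlo, eventually_gt_atTop 0] with t hlo ht
    have hlog : log A - d₀ * t ≤ log (f t) := by
      simpa [log_mul hA.ne' (exp_pos _).ne', sub_eq_add_neg] using
        log_le_log (by positivity) hlo
    rw [div_le_iff_of_neg (neg_neg_of_pos ht)]
    field_simp
    linarith

section ExpSum

variable {ι : Type*} {c d : ι → ℝ} {d₀ t : ℝ}

theorem mul_exp_le_of_min (hc : ∀ i, 0 ≤ c i) (hmin : ∀ i, c i ≠ 0 → d₀ ≤ d i) (ht : 0 ≤ t)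
    (i : ι) : c i * exp (-(d i * t)) ≤ c i * exp (-(d₀ * t)) := by
  rcases eq_or_ne (c i) 0 with h | h
  · simp [h]
  · gcongr
    exacts [hc i, hmin i h]

theorem summable_mul_exp_of_min (hc : ∀ i, 0 ≤ c i) (hmin : ∀ i, c i ≠ 0 → d₀ ≤ d i)
    (hs : Summable c) (ht : 0 ≤ t) : Summable fun i => c i * exp (-(d i * t)) :=
  (hs.mul_right _).of_nonneg_of_le (fun i => mul_nonneg (hc i) (exp_pos _).le)
    (mul_exp_le_of_min hc hmin ht)

theorem tsum_mul_exp_le_of_min (hc : ∀ i, 0 ≤ c i) (hmin : ∀ i, c i ≠ 0 → d₀ ≤ d i)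
    (hs : Summable c) (ht : 0 ≤ t) :
    ∑' i, c i * exp (-(d i * t)) ≤ (∑' i, c i) * exp (-(d₀ * t)) := by
  rw [← tsum_mul_right]
  exact (summable_mul_exp_of_min hc hmin hs ht).tsum_le_tsum (mul_exp_le_of_min hc hmin ht)
    (hs.mul_right _)

theorem tendsto_log_tsum_mul_exp_div_neg (hc : ∀ i, 0 ≤ c i)
    (hmem : ∃ i₀, c i₀ ≠ 0 ∧ d i₀ = d₀) (hmin : ∀ i, c i ≠ 0 → d₀ ≤ d i) (hs : Summable c) :
    Tendsto (fun t => log (∑' i, c i * exp (-(d i * t))) / -t) atTop (𝓝 d₀) := by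
  obtain ⟨i₀, hi₀, rfl⟩ := hmem
  refine tendsto_log_div_neg_of_exp_bounds (lt_of_le_of_ne (hc i₀) hi₀.symm) ?_
    (eventually_ge_atTop 0 |>.mono fun t ht => tsum_mul_exp_le_of_min hc hmin hs ht)
  filter_upwards [eventually_ge_atTop 0] with t ht
  exact (summable_mul_exp_of_min hc hmin hs ht).le_tsum i₀
    fun i _ => mul_nonneg (hc i) (exp_pos _).le

end ExpSum

theorem degree_limit_eq_min_general
    {ι : Type*} (c d : ι → ℝ) (hc : ∀ i, 0 ≤ c i) (d₀ : ℝ)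
    (hmem : ∃ i₀, c i₀ ≠ 0 ∧ d i₀ = d₀)
    (hmin : ∀ i, c i ≠ 0 → d₀ ≤ d i)
    (hsum : ∀ j : ℕ, Summable (fun i => c i * (2 : ℝ) ^ (-(2 * d i * (j : ℝ))))) :
    Tendsto
      (fun j : ℕ =>
        Real.log (∑' i, c i * (2 : ℝ) ^ (-(2 * d i * (j : ℝ))))
          / (-(2 * (j : ℝ)) * Real.log 2))
      atTop (nhds d₀) := by
  have hs : Summable c := by simpa using hsum 0
  have hscale : Tendsto (fun j : ℕ => 2 * (j : ℝ) * log 2) atTop atTop :=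
    (tendsto_natCast_atTop_atTop.const_mul_atTop two_pos).atTop_mul_const (log_pos one_lt_two)
  have hexp : ∀ (i : ι) (j : ℕ),
      (2 : ℝ) ^ (-(2 * d i * (j : ℝ))) = exp (-(d i * (2 * j * log 2))) := fun i j => by
    rw [rpow_def_of_pos two_pos]
    ring_nf
  convert (tendsto_log_tsum_mul_exp_div_neg hc hmem hmin hs).comp hscale using 2 with j
  simp only [Function.comp_apply, hexp, neg_mul]

/-- **The degree equals the minimal homogeneous degree** (the abstract computation
behind Corollary 2.11 of Chen–Sun, "Analytic tangent cones of admissible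
Hermitian-Yang-Mills connections"): if `c i ≥ 0` has nonempty support, `d` attains
a minimum `d₀` on the support of `c`, and each `∑ᵢ cᵢ 2^{-2dᵢ j}` is summable, then
`lim_{j→∞} (log ∑ᵢ cᵢ 2^{-2dᵢ j}) / (−2 j log 2) = d₀`. -/
theorem degree_limit_eq_min
    {ι : Type*} [Countable ι] (c d : ι → ℝ) (hc : ∀ i, 0 ≤ c i) (d₀ : ℝ)
    (hmem : ∃ i₀, c i₀ ≠ 0 ∧ d i₀ = d₀)
    (hmin : ∀ i, c i ≠ 0 → d₀ ≤ d i)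
    (hsum : ∀ j : ℕ, Summable (fun i => c i * (2 : ℝ) ^ (-(2 * d i * (j : ℝ))))) :
    Tendsto
      (fun j : ℕ =>
        Real.log (∑' i, c i * (2 : ℝ) ^ (-(2 * d i * (j : ℝ))))
          / (-(2 * (j : ℝ)) * Real.log 2))
      atTop (nhds d₀) :=
  degree_limit_eq_min_general c d hc d₀ hmem hmin hsum
end

section
/- Let n ≥ 1, m ≥ 1, and let s be a holomorphic ℂ^m-valued function on the open unit ball B ⊂ ℂⁿ, with power series expansion at 0 given by a formal multilinear series p converging on B; for d ∈ ℕ let s_d(z) := p_d(z,…,z) denote the degree-d homogeneous part of s. Then for every integer k ≥ 1, ∫_{A(2^{-k-1}, 2^{-k})} ‖s(z)‖² dV(z) = ∑_{d ∈ ℕ} 2^{-(2d+2n)(k−1)} · ∫_{A(1/4,1/2)} ‖s_d(z)‖² dV(z). -/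
open MeasureTheory

/-- Lebesgue measure on `ℂⁿ ≅ ℝ^{2n}`, via the identification of
`EuclideanSpace ℂ (Fin n)` with `Fin n → ℂ`. -/
noncomputable instance (n : ℕ) : MeasureSpace (EuclideanSpace ℂ (Fin n)) :=
  { volume := Measure.map (WithLp.toLp 2) (volume : Measure (Fin n → ℂ)) }

/-- The open annulus `{z ∈ ℂⁿ : a < ‖z‖ < b}`. -/
def annulus (n : ℕ) (a b : ℝ) : Set (EuclideanSpace ℂ (Fin n)) :=
  {z | a < ‖z‖ ∧ ‖z‖ < b}

/-!
Rotating by a unit complex number `c` preserves Lebesgue measure and every annulus, and multiplies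
`⟪s_d, s_e⟫` by `conj c ^ d * c ^ e`, which is `≠ 1` for a suitable root of unity when `d ≠ e`;
so the homogeneous pieces are `L²`-orthogonal on annuli. On an annulus inside a ball of radius
`< 1` the terms of the power series are dominated by a summable sequence, and dominated convergence
turns Pythagoras for the partial sums into `∫ ‖s‖² = ∑_d ∫ ‖s_d‖²`. Finally the dyadic annulus is
`2^{1-k} • A(1/4, 1/2)`, and scaling by `r` multiplies `∫ ‖s_d‖²` by `r^{2n}` (volume) times
`r^{2d}` (homogeneity).
-/

open Filter Finset Pointwise
open scoped ENNReal NNReal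

section Orthogonal

variable {α 𝕜 F ι : Type*} [MeasurableSpace α] {μ : Measure α} [RCLike 𝕜]
  [NormedAddCommGroup F] [InnerProductSpace 𝕜 F]

theorem integral_norm_sum_sq_of_orthogonal {f : ι → α → F}
    (hf_int : ∀ i j, Integrable (fun x => inner 𝕜 (f i x) (f j x)) μ)
    (hf_orth : Pairwise fun i j => ∫ x, inner 𝕜 (f i x) (f j x) ∂μ = 0) (s : Finset ι) :
    ∫ x, ‖∑ i ∈ s, f i x‖ ^ 2 ∂μ = ∑ i ∈ s, ∫ x, ‖f i x‖ ^ 2 ∂μ := by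
  have hre (i j : ι) : ∫ x, RCLike.re (inner 𝕜 (f i x) (f j x)) ∂μ
      = RCLike.re (∫ x, inner 𝕜 (f i x) (f j x) ∂μ) := integral_re (hf_int i j)
  calc ∫ x, ‖∑ i ∈ s, f i x‖ ^ 2 ∂μ
      = ∫ x, ∑ i ∈ s, ∑ j ∈ s, RCLike.re (inner 𝕜 (f i x) (f j x)) ∂μ := by
        simp_rw [← inner_self_eq_norm_sq (𝕜 := 𝕜), sum_inner, inner_sum, map_sum]
    _ = ∑ i ∈ s, ∑ j ∈ s, RCLike.re (∫ x, inner 𝕜 (f i x) (f j x) ∂μ) := by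
        rw [integral_finsetSum _ fun i _ => integrable_finsetSum _ fun j _ => (hf_int i j).re]
        simp_rw [integral_finsetSum _ fun j _ => (hf_int _ j).re, hre]
    _ = ∑ i ∈ s, RCLike.re (∫ x, inner 𝕜 (f i x) (f i x) ∂μ) :=
        sum_congr rfl fun i hi => sum_eq_single_of_mem i hi fun j _ hji => by
          rw [hf_orth hji.symm, map_zero]
    _ = ∑ i ∈ s, ∫ x, ‖f i x‖ ^ 2 ∂μ := by
        simp_rw [← hre, inner_self_eq_norm_sq]

theorem hasSum_integral_norm_sq_of_orthogonal [IsFiniteMeasure μ] {f : ℕ → α → F}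
    {g : α → F} (hf_meas : ∀ i, AEStronglyMeasurable (f i) μ) {b : ℕ → ℝ} (hb : Summable b)
    (hfb : ∀ i, ∀ᵐ x ∂μ, ‖f i x‖ ≤ b i)
    (hf_orth : Pairwise fun i j => ∫ x, inner 𝕜 (f i x) (f j x) ∂μ = 0)
    (hfg : ∀ᵐ x ∂μ, HasSum (fun i => f i x) (g x)) :
    HasSum (fun i => ∫ x, ‖f i x‖ ^ 2 ∂μ) (∫ x, ‖g x‖ ^ 2 ∂μ) := by
  have hf_int : ∀ i j, Integrable (fun x => inner 𝕜 (f i x) (f j x)) μ := fun i j =>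
    .of_bound ((hf_meas i).inner (hf_meas j)) (b i * b j) <|
      (hfb i).mp <| (hfb j).mono fun x hj hi => (norm_inner_le_norm _ _).trans <|
        mul_le_mul hi hj (norm_nonneg _) ((norm_nonneg _).trans hi)
  have hpartial : ∀ᵐ x ∂μ, ∀ N, ‖∑ i ∈ range N, f i x‖ ≤ ∑' i, |b i| := by
    filter_upwards [ae_all_iff.mpr hfb] with x hx N
    calc ‖∑ i ∈ range N, f i x‖ ≤ ∑ i ∈ range N, |b i| :=
          norm_sum_le_of_le _ fun i _ => (hx i).trans (le_abs_self _)
      _ ≤ ∑' i, |b i| := hb.abs.sum_le_tsum _ fun i _ => abs_nonneg _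
  rw [hasSum_iff_tendsto_nat_of_nonneg fun i => integral_nonneg fun x => by positivity]
  simp_rw [← integral_norm_sum_sq_of_orthogonal hf_int hf_orth]
  refine tendsto_integral_of_dominated_convergence (fun _ => (∑' i, |b i|) ^ 2)
    (fun N => (aestronglyMeasurable_fun_sum _ fun i _ => hf_meas i).norm.pow 2)
    (integrable_const _) (fun N => ?_) ?_
  · filter_upwards [hpartial] with x hx
    rw [Real.norm_of_nonneg (by positivity)]
    exact pow_le_pow_left₀ (norm_nonneg _) (hx N) 2
  · filter_upwards [hfg] with x hx
    exact ((continuous_norm.pow 2).tendsto _).comp hx.tendsto_sum_nat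

end Orthogonal

theorem ContinuousMultilinearMap.apply_const_smul {R M N : Type*} [CommSemiring R]
    [AddCommMonoid M] [Module R M] [TopologicalSpace M] [AddCommMonoid N] [Module R N]
    [TopologicalSpace N] {d : ℕ} (P : ContinuousMultilinearMap R (fun _ : Fin d => M) N)
    (c : R) (z : M) : P (fun _ => c • z) = c ^ d • P (fun _ => z) := by
  simpa using P.map_smul_univ (fun _ => c) (fun _ => z)

theorem exists_norm_eq_one_pow_ne_pow {d e : ℕ} (hde : d ≠ e) :
    ∃ c : ℂ, ‖c‖ = 1 ∧ c ^ d ≠ c ^ e := by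
  have hN : d + e + 1 ≠ 0 := by omega
  have hζ := Complex.isPrimitiveRoot_exp (d + e + 1) hN
  exact ⟨_, hζ.norm'_eq_one hN, fun h => hde (hζ.pow_inj (by omega) (by omega) h)⟩

section HaarComplex

variable {E F : Type*} [NormedAddCommGroup E] [NormedSpace ℂ E] [FiniteDimensional ℂ E]
  [MeasurableSpace E] [BorelSpace E] (μ : Measure E) [μ.IsAddHaarMeasure]
  [NormedAddCommGroup F] [InnerProductSpace ℂ F]

theorem measurePreserving_const_smul_of_norm_eq_one {c : ℂ} (hc : ‖c‖ = 1) :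
    MeasurePreserving (c • · : E → E) μ μ := by
  set f : E →ₗ[ℝ] E := (c • LinearMap.id : E →ₗ[ℂ] E).restrictScalars ℝ
  have hdet : LinearMap.det f = 1 := by
    rw [LinearMap.det_restrictScalars, LinearMap.det_smul, LinearMap.det_id, mul_one, map_pow,
      Algebra.norm_complex_apply, Complex.normSq_eq_norm_sq, hc, one_pow, one_pow]
  refine ⟨(continuous_const_smul c).measurable, ?_⟩
  change Measure.map f μ = μ
  simpa [hdet] using Measure.map_linearMap_addHaar_eq_smul_addHaar μ (f := f) (by simp [hdet])

theorem setIntegral_norm_preimage_comp_smul {G : Type*} [NormedAddCommGroup G]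
    [NormedSpace ℝ G] {c : ℂ} (hc : ‖c‖ = 1) (T : Set ℝ) (g : E → G) :
    ∫ z in norm ⁻¹' T, g (c • z) ∂μ = ∫ z in norm ⁻¹' T, g z ∂μ := by
  have hc₀ : c ≠ 0 := norm_ne_zero_iff.mp (by simp [hc])
  have hpre : (c • · : E → E) ⁻¹' (norm ⁻¹' T) = norm ⁻¹' T := by
    ext z; simp [norm_smul, hc]
  simpa [hpre] using (measurePreserving_const_smul_of_norm_eq_one μ hc).setIntegral_preimage_emb
    (MeasurableEquiv.smul₀ c hc₀).measurableEmbedding g (norm ⁻¹' T)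

open ComplexConjugate in
theorem setIntegral_inner_apply_diag_eq_zero {d e : ℕ} (hde : d ≠ e) (P : E [×d]→L[ℂ] F)
    (Q : E [×e]→L[ℂ] F) (T : Set ℝ) :
    ∫ z in norm ⁻¹' T, inner ℂ (P fun _ => z) (Q fun _ => z) ∂μ = 0 := by
  obtain ⟨c, hc, hcde⟩ := exists_norm_eq_one_pow_ne_pow hde
  set I := ∫ z in norm ⁻¹' T, inner ℂ (P fun _ => z) (Q fun _ => z) ∂μ
  set w := conj (c ^ d) * c ^ e
  -- `w ≠ 1` because `conj (c ^ d)` is the inverse of `c ^ d`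
  have hw : w ≠ 1 := by
    intro hw
    have hcd : c ^ d * conj (c ^ d) = 1 := by
      rw [Complex.mul_conj, Complex.normSq_eq_norm_sq, norm_pow, hc]; simp
    apply hcde
    calc c ^ d = c ^ d * w := by rw [hw, mul_one]
      _ = c ^ e := by rw [← mul_assoc, hcd, one_mul]
  have hrot : I = w * I := by
    rw [← integral_const_mul]
    refine (setIntegral_norm_preimage_comp_smul μ hc T
      (fun z => inner ℂ (P fun _ => z) (Q fun _ => z))).symm.trans ?_
    simp only [P.apply_const_smul, Q.apply_const_smul, inner_smul_left, inner_smul_right, w]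
    ring_nf
  have : (1 - w) * I = 0 := by linear_combination hrot
  exact (mul_eq_zero.mp this).resolve_left (sub_ne_zero.mpr hw.symm)

theorem HasFPowerSeriesOnBall.hasSum_setIntegral_norm_sq {s : E → F}
    {p : FormalMultilinearSeries ℂ E F} {R : ℝ≥0∞} (hs : HasFPowerSeriesOnBall s p 0 R)
    {T : Set ℝ} (hT : MeasurableSet T) {ρ : ℝ≥0} (hρ : (ρ : ℝ≥0∞) < R)
    (hTρ : T ⊆ Set.Iic (ρ : ℝ)) :
    HasSum (fun d => ∫ z in norm ⁻¹' T, ‖p d fun _ => z‖ ^ 2 ∂μ)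
      (∫ z in norm ⁻¹' T, ‖s z‖ ^ 2 ∂μ) := by
  have hS : norm ⁻¹' T ⊆ Metric.closedBall (0 : E) ρ := fun z hz => by
    simpa using hTρ hz
  have : IsFiniteMeasure (μ.restrict (norm ⁻¹' T)) :=
    isFiniteMeasure_restrict.mpr (measure_mono hS |>.trans_lt measure_closedBall_lt_top).ne
  refine hasSum_integral_norm_sq_of_orthogonal (𝕜 := ℂ)
    (fun d => ((p d).cont.comp (continuous_pi fun _ => continuous_id)).aestronglyMeasurable)
    (p.summable_norm_mul_pow (hρ.trans_le hs.r_le)) (fun d => ?_)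
    (fun d e hde => setIntegral_inner_apply_diag_eq_zero μ hde (p d) (p e) T) ?_
  · refine ae_restrict_of_forall_mem (measurable_norm hT) fun z hz => ?_
    exact (p d).le_opNorm_mul_pow_of_le ((pi_norm_const_le z).trans (by simpa using hS hz))
  · refine ae_restrict_of_forall_mem (measurable_norm hT) fun z hz => ?_
    have hzρ : ‖z‖₊ ≤ ρ := NNReal.coe_le_coe.mp (hTρ hz)
    simpa using hs.hasSum (Metric.mem_eball.mpr <|
      (edist_zero_right z).trans_lt <| (ENNReal.coe_le_coe.mpr hzρ).trans_lt hρ)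

theorem setIntegral_smul_set_norm_apply_diag_sq {d : ℕ} (P : E [×d]→L[ℂ] F) {r : ℝ}
    (hr : 0 < r) (S : Set E) :
    ∫ z in r • S, ‖P fun _ => z‖ ^ 2 ∂μ
      = r ^ (Module.finrank ℝ E + 2 * d) * ∫ z in S, ‖P fun _ => z‖ ^ 2 ∂μ := by
  have hP (z : E) : ‖P fun _ => r • z‖ ^ 2 = r ^ (2 * d) * ‖P fun _ => z‖ ^ 2 := by
    rw [RCLike.real_smul_eq_coe_smul (K := ℂ), P.apply_const_smul, norm_smul, norm_pow,
      RCLike.norm_ofReal, abs_of_pos hr, mul_pow, ← pow_mul, mul_comm d]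
  rw [pow_add, mul_assoc, ← integral_const_mul, ← smul_eq_mul,
    ← inv_smul_eq_iff₀ (by positivity), ← Measure.setIntegral_comp_smul_of_pos μ _ S hr]
  simp_rw [hP]

end HaarComplex

instance (n : ℕ) : (volume : Measure (EuclideanSpace ℂ (Fin n))).IsAddHaarMeasure :=
  (PiLp.continuousLinearEquiv 2 ℝ (fun _ : Fin n => ℂ)).symm.isAddHaarMeasure_map _

theorem annulus_eq_preimage_norm (n : ℕ) (a b : ℝ) : annulus n a b = norm ⁻¹' Set.Ioo a b :=
  rfl

theorem smul_annulus {n : ℕ} {r : ℝ} (hr : 0 < r) (a b : ℝ) :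
    r • annulus n a b = annulus n (r * a) (r * b) := by
  ext z
  simp only [Set.mem_smul_set_iff_inv_smul_mem₀ hr.ne', annulus, Set.mem_ofPred_eq, norm_smul,
    norm_inv, Real.norm_of_nonneg hr.le, inv_mul_eq_div, lt_div_iff₀ hr, div_lt_iff₀ hr,
    mul_comm r]

theorem dyadic_annulus_expansion_general (n m : ℕ)
    (s : EuclideanSpace ℂ (Fin n) → EuclideanSpace ℂ (Fin m))
    (p : FormalMultilinearSeries ℂ (EuclideanSpace ℂ (Fin n))
      (EuclideanSpace ℂ (Fin m)))
    (hs : HasFPowerSeriesOnBall s p 0 1) :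
    ∀ k : ℕ, 1 ≤ k →
      ∫ z in annulus n ((2:ℝ) ^ (-(k:ℝ) - 1)) ((2:ℝ) ^ (-(k:ℝ))), ‖s z‖ ^ 2
        = ∑' d : ℕ, (2:ℝ) ^ (-((2 * (d:ℝ) + 2 * n) * ((k:ℝ) - 1))) *
            ∫ z in annulus n (1/4) (1/2), ‖p d (fun _ => z)‖ ^ 2 := by
  intro k hk
  have hA : annulus n ((2:ℝ) ^ (-(k:ℝ) - 1)) ((2:ℝ) ^ (-(k:ℝ)))
      = (2:ℝ) ^ (1 - (k:ℝ)) • annulus n (1/4) (1/2) := by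
    rw [smul_annulus (by positivity), show -(k:ℝ) - 1 = (1 - k) + (-2) by ring,
      show -(k:ℝ) = (1 - k) + (-1) by ring, Real.rpow_add two_pos, Real.rpow_add two_pos]
    norm_num
  have hkρ : (2:ℝ) ^ (-(k:ℝ)) ≤ ((2⁻¹ : ℝ≥0) : ℝ) := by
    rw [NNReal.coe_inv, NNReal.coe_ofNat, ← Real.rpow_neg_one]
    exact Real.rpow_le_rpow_of_exponent_le one_le_two (by simpa using hk)
  have hsum := hs.hasSum_setIntegral_norm_sq volume
    (T := Set.Ioo ((2:ℝ) ^ (-(k:ℝ) - 1)) ((2:ℝ) ^ (-(k:ℝ)))) measurableSet_Ioo (by norm_num)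
    (Set.Ioo_subset_Iio_self.trans (Set.Iio_subset_Iic_iff.mpr hkρ))
  rw [← annulus_eq_preimage_norm] at hsum
  rw [← hsum.tsum_eq]
  refine tsum_congr fun d => ?_
  rw [hA, setIntegral_smul_set_norm_apply_diag_sq _ _ (by positivity), finrank_real_of_complex,
    finrank_euclideanSpace_fin, ← Real.rpow_natCast, ← Real.rpow_mul two_pos.le]
  congr 2
  push_cast
  ring

/-- **Dyadic annulus `L²` expansion into homogeneous pieces** (used in the proof
of Proposition 2.25 of Chen–Sun, "Analytic tangent cones of admissible
Hermitian-Yang-Mills connections", following Lemma 3.4 of [CS1]): if `s` is the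
sum on the unit ball of a power series `p` centered at `0`, with homogeneous
pieces `s_d(z) = p_d(z,…,z)`, then for every `k ≥ 1`,
`∫_{A(2^{-k-1},2^{-k})} ‖s‖² = ∑_d 2^{-(2d+2n)(k-1)} ∫_{A(1/4,1/2)} ‖s_d‖²`. -/
theorem dyadic_annulus_expansion (n m : ℕ) (hn : 1 ≤ n) (hm : 1 ≤ m)
    (s : EuclideanSpace ℂ (Fin n) → EuclideanSpace ℂ (Fin m))
    (p : FormalMultilinearSeries ℂ (EuclideanSpace ℂ (Fin n))
      (EuclideanSpace ℂ (Fin m)))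
    (hs : HasFPowerSeriesOnBall s p 0 1) :
    ∀ k : ℕ, 1 ≤ k →
      ∫ z in annulus n ((2:ℝ) ^ (-(k:ℝ) - 1)) ((2:ℝ) ^ (-(k:ℝ))), ‖s z‖ ^ 2
        = ∑' d : ℕ, (2:ℝ) ^ (-((2 * (d:ℝ) + 2 * n) * ((k:ℝ) - 1))) *
            ∫ z in annulus n (1/4) (1/2), ‖p d (fun _ => z)‖ ^ 2 :=
  dyadic_annulus_expansion_general n m s p hs
end
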